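/- (Proposition 1: monotonicity of the BI-AWGN symmetric capacity.) The BI-AWGN symmetric capacity h(σ²) is strictly decreasing as a function of the noise variance σ² on (0,∞); equivalently, under the Gaussian approximation in which a subchannel with LLR mean m is modeled as a BI-AWGN channel with σ² = 2/m, the symmetric capacity is strictly increasing in the LLR mean m. -/

import Mathlib

/-- The BPSK-modulated BI-AWGN transition density
`W(y|x) = (2πσ²)^{−1/2}·exp(−(y − (1 − 2x))²/(2σ²))`. -/
noncomputable def Wden (σ2 x y : ℝ) : ℝ :=
  (Real.sqrt (2 * Real.pi * σ2))⁻¹ * Real.exp (-(y - (1 - 2 * x)) ^ 2 / (2 * σ2))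

/-- The BI-AWGN symmetric capacity
`h(σ²) = (1/2)·Σ_{x∈{0,1}} ∫_ℝ W(y|x)·log₂(2W(y|x)/(W(y|0)+W(y|1))) dy`. -/
noncomputable def capBIAWGN (σ2 : ℝ) : ℝ :=
  (1 / 2) *
    ((∫ y : ℝ, Wden σ2 0 y *
        Real.logb 2 (2 * Wden σ2 0 y / (Wden σ2 0 y + Wden σ2 1 y))) +
     (∫ y : ℝ, Wden σ2 1 y *
        Real.logb 2 (2 * Wden σ2 1 y / (Wden σ2 0 y + Wden σ2 1 y))))

/-!
Write `s = 1/σ`. Given input `0`, the log-likelihood ratio of the BI-AWGN output is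
`L = 2s² + 2sZ` with `Z` standard normal, and by the symmetry of the channel
`h(σ²) = 1 - E[log(1 + e^{-L})] / log 2`. Differentiating under the integral sign in `s` and
applying Stein's lemma `E[Z g(Z)] = E[g'(Z)]` to `g = sigmoid(-L)` gives
`d/ds E[log(1 + e^{-L})] = -4s E[sigmoid(-L)²] < 0`, so the capacity increases with `s`.
-/

open Real MeasureTheory ProbabilityTheory Filter Set NNReal

namespace Real

noncomputable def softplus (x : ℝ) : ℝ := log (1 + exp x)

lemma softplus_nonneg (x : ℝ) : 0 ≤ softplus x :=
  log_nonneg (by linarith [exp_pos x])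

lemma softplus_le_log_two_add_abs (x : ℝ) : softplus x ≤ log 2 + |x| := by
  have h : 1 + exp x ≤ 2 * exp |x| := by
    linarith [exp_le_exp.2 (le_abs_self x), one_le_exp (abs_nonneg x)]
  calc softplus x ≤ log (2 * exp |x|) := log_le_log (by positivity) h
    _ = log 2 + |x| := by rw [log_mul two_ne_zero (exp_pos _).ne', log_exp]

lemma hasDerivAt_softplus (x : ℝ) : HasDerivAt softplus (sigmoid x) x := by
  refine (((hasDerivAt_exp x).const_add 1).log (by positivity)).congr_deriv ?_
  rw [sigmoid_def, exp_neg]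
  field_simp
  ring

@[fun_prop]
lemma continuous_softplus : Continuous softplus :=
  continuous_iff_continuousAt.2 fun x => (hasDerivAt_softplus x).continuousAt

end Real

namespace ProbabilityTheory

variable {μ : ℝ} {v : ℝ≥0}

lemma integrable_gaussianReal_of_abs_le {f : ℝ → ℝ}
    (hf : AEStronglyMeasurable f (gaussianReal μ v)) {a b : ℝ} (h : ∀ x, |f x| ≤ a + b * |x|) :
    Integrable f (gaussianReal μ v) := by
  have hid : Integrable id (gaussianReal μ v) := (memLp_id_gaussianReal 1).integrable le_rfl
  refine ((integrable_const a).add (hid.abs.const_mul b)).mono' hf (ae_of_all _ fun x => ?_)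
  simpa using h x

lemma integrable_gaussianReal_iff (hv : v ≠ 0) {f : ℝ → ℝ} :
    Integrable f (gaussianReal μ v) ↔ Integrable (fun x => gaussianPDFReal μ v x * f x) := by
  rw [gaussianReal_of_var_ne_zero _ hv, integrable_withDensity_iff_integrable_smul'
    (measurable_gaussianPDF μ v) (ae_of_all _ fun _ => gaussianPDF_lt_top)]
  simp only [toReal_gaussianPDF, smul_eq_mul]

lemma hasDerivAt_gaussianPDFReal (μ : ℝ) (v : ℝ≥0) (x : ℝ) :
    HasDerivAt (gaussianPDFReal μ v) (-((x - μ) / v) * gaussianPDFReal μ v x) x := by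
  have h : HasDerivAt (fun y => -(y - μ) ^ 2 / (2 * v)) (-(2 * (x - μ)) / (2 * v)) x := by
    simpa using (((hasDerivAt_id x).sub_const μ).pow 2).neg.div_const (2 * (v : ℝ))
  refine (h.exp.const_mul _).congr_deriv ?_
  rw [gaussianPDFReal]
  rcases eq_or_ne (v : ℝ) 0 with hv | hv
  · simp [hv]
  · field_simp

lemma integral_sub_mul_gaussianReal {g g' : ℝ → ℝ} (hg : ∀ x, HasDerivAt g (g' x) x) {C : ℝ}
    (hgC : ∀ x, |g x| ≤ C) (hg' : Integrable g' (gaussianReal μ v)) :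
    ∫ x, (x - μ) * g x ∂gaussianReal μ v = v * ∫ x, g' x ∂gaussianReal μ v := by
  rcases eq_or_ne v 0 with rfl | hv
  · simp [gaussianReal_zero_var]
  have hv' : (v : ℝ) ≠ 0 := by exact_mod_cast hv
  have hgm : AEStronglyMeasurable g (gaussianReal μ v) :=
    (continuous_iff_continuousAt.2 fun x => (hg x).continuousAt).aestronglyMeasurable
  have hgp : Integrable (fun x => gaussianPDFReal μ v x * g x) := by
    refine (integrable_gaussianReal_iff hv).1 (integrable_gaussianReal_of_abs_le hgm
      (a := C) (b := 0) fun x => ?_)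
    simpa using hgC x
  have hxgp : Integrable (fun x => gaussianPDFReal μ v x * ((x - μ) * g x)) := by
    refine (integrable_gaussianReal_iff hv).1 (integrable_gaussianReal_of_abs_le
      ((measurable_id.sub_const μ).aestronglyMeasurable.mul hgm) (a := |μ| * C) (b := C)
      fun x => ?_)
    rw [abs_mul]
    nlinarith [abs_sub x μ, hgC x, abs_nonneg (x - μ), abs_nonneg (g x)]
  have hibp : ∫ x, g x * (-((x - μ) / v) * gaussianPDFReal μ v x)
      = -∫ x, g' x * gaussianPDFReal μ v x :=
    integral_mul_deriv_eq_deriv_mul_of_integrable (fun x _ => hg x)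
      (fun x _ => hasDerivAt_gaussianPDFReal μ v x)
      ((hxgp.const_mul (-(v : ℝ)⁻¹)).congr (ae_of_all _ fun x => by
        simp only [Pi.mul_apply]; field_simp))
      (by simpa [Pi.mul_def, mul_comm] using (integrable_gaussianReal_iff hv).1 hg')
      (by simpa [Pi.mul_def, mul_comm] using hgp)
  simp only [integral_gaussianReal_eq_integral_smul hv, smul_eq_mul]
  calc ∫ x, gaussianPDFReal μ v x * ((x - μ) * g x)
      = -v * ∫ x, g x * (-((x - μ) / v) * gaussianPDFReal μ v x) := by
        rw [← integral_const_mul]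
        congr with x
        field_simp
    _ = v * ∫ x, gaussianPDFReal μ v x * g' x := by
        simp only [hibp, neg_mul_neg, mul_comm]

lemma gaussianReal_eq_map_affine {c : ℝ} (hv : (v : ℝ) = c ^ 2) :
    gaussianReal μ v = (gaussianReal 0 1).map (fun u => μ + c * u) := by
  rw [← Function.comp_def (μ + ·) (c * ·), ← Measure.map_map (by fun_prop) (by fun_prop),
    gaussianReal_map_const_mul, gaussianReal_map_const_add, mul_zero, zero_add, mul_one]
  exact congrArg _ (NNReal.eq hv)

lemma integral_gaussianReal_eq_integral_affine {E : Type*} [NormedAddCommGroup E]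
    [NormedSpace ℝ E] {c : ℝ} (hc : c ≠ 0) (hv : (v : ℝ) = c ^ 2) (f : ℝ → E) :
    ∫ y, f y ∂gaussianReal μ v = ∫ u, f (μ + c * u) ∂gaussianReal 0 1 := by
  rw [gaussianReal_eq_map_affine hv]
  exact ((measurableEmbedding_addLeft μ).comp (measurableEmbedding_mulLeft₀ hc)).integral_map f

end ProbabilityTheory

lemma integral_Wden_mul {σ2 c : ℝ} (hc : c ≠ 0) (hσ2 : σ2 = c ^ 2) (x : ℝ) (f : ℝ → ℝ) :
    ∫ y, Wden σ2 x y * f y = ∫ u, f (1 - 2 * x + c * u) ∂gaussianReal 0 1 := by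
  have hv : σ2.toNNReal ≠ 0 := by simp [hσ2, hc]
  have hW : Wden σ2 x = gaussianPDFReal (1 - 2 * x) σ2.toNNReal := by
    ext y
    simp [Wden, gaussianPDFReal, hσ2, sq_nonneg]
  have hvc : (σ2.toNNReal : ℝ) = c ^ 2 := by simp [hσ2, sq_nonneg]
  rw [← integral_gaussianReal_eq_integral_affine hc hvc,
    integral_gaussianReal_eq_integral_smul hv, hW]
  rfl

lemma Wden_pos {σ2 : ℝ} (hσ2 : 0 < σ2) (x y : ℝ) : 0 < Wden σ2 x y := by
  unfold Wden
  positivity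

lemma Wden_one_eq {σ2 : ℝ} (hσ2 : σ2 ≠ 0) (y : ℝ) :
    Wden σ2 1 y = exp (-2 * y / σ2) * Wden σ2 0 y := by
  rw [Wden, Wden, mul_left_comm, ← exp_add]
  congr 2
  field_simp
  ring

lemma logb_two_mul_div_add_exp_mul {a : ℝ} (ha : 0 < a) (r : ℝ) :
    logb 2 (2 * a / (a + exp r * a)) = 1 - softplus r / log 2 := by
  have h : 2 * a / (a + exp r * a) = 2 / (1 + exp r) := by
    field_simp
  rw [h, logb_div two_ne_zero (by positivity), logb_self_eq_one one_lt_two, softplus, logb]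

lemma logb_two_mul_Wden_zero_div {σ2 : ℝ} (hσ2 : 0 < σ2) (y : ℝ) :
    logb 2 (2 * Wden σ2 0 y / (Wden σ2 0 y + Wden σ2 1 y))
      = 1 - softplus (-2 * y / σ2) / log 2 := by
  rw [Wden_one_eq hσ2.ne', logb_two_mul_div_add_exp_mul (Wden_pos hσ2 0 y)]

lemma logb_two_mul_Wden_one_div {σ2 : ℝ} (hσ2 : 0 < σ2) (y : ℝ) :
    logb 2 (2 * Wden σ2 1 y / (Wden σ2 0 y + Wden σ2 1 y))
      = 1 - softplus (2 * y / σ2) / log 2 := by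
  have h : Wden σ2 0 y = exp (2 * y / σ2) * Wden σ2 1 y := by
    rw [Wden_one_eq hσ2.ne', ← mul_assoc, ← exp_add]
    simp [neg_mul, neg_div]
  rw [h, add_comm, logb_two_mul_div_add_exp_mul (Wden_pos hσ2 1 y)]

noncomputable def equivocation (s : ℝ) : ℝ :=
  ∫ u, softplus (-2 * s ^ 2 - 2 * s * u) ∂gaussianReal 0 1

lemma integrable_softplus_equivocation (s : ℝ) :
    Integrable (fun u => softplus (-2 * s ^ 2 - 2 * s * u)) (gaussianReal 0 1) := by
  have hcont : Continuous fun u => softplus (-2 * s ^ 2 - 2 * s * u) := by fun_prop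
  refine integrable_gaussianReal_of_abs_le hcont.aestronglyMeasurable
    (a := log 2 + 2 * s ^ 2) (b := 2 * |s|) fun u => ?_
  rw [abs_of_nonneg (softplus_nonneg _)]
  refine (softplus_le_log_two_add_abs _).trans ?_
  have := abs_sub (-2 * s ^ 2) (2 * s * u)
  simp only [abs_mul, abs_neg, abs_two, abs_pow, sq_abs] at this
  linarith

lemma capBIAWGN_sq_eq {c : ℝ} (hc : c ≠ 0) :
    capBIAWGN (c ^ 2) = 1 - equivocation c⁻¹ / log 2 := by
  have hc2 : 0 < c ^ 2 := by positivity
  have harg₀ (u : ℝ) : -2 * (1 - 2 * 0 + c * u) / c ^ 2 = -2 * c⁻¹ ^ 2 - 2 * c⁻¹ * u := by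
    field_simp; ring
  have harg₁ (u : ℝ) : 2 * (1 - 2 * 1 + -c * u) / c ^ 2 = -2 * c⁻¹ ^ 2 - 2 * c⁻¹ * u := by
    field_simp; ring
  have hE : ∫ u, (1 - softplus (-2 * c⁻¹ ^ 2 - 2 * c⁻¹ * u) / log 2) ∂gaussianReal 0 1
      = 1 - equivocation c⁻¹ / log 2 := by
    rw [integral_sub (integrable_const 1) ((integrable_softplus_equivocation _).div_const _),
      integral_div, integral_const]
    simp [equivocation]
  rw [capBIAWGN, integral_Wden_mul hc rfl, integral_Wden_mul (neg_ne_zero.2 hc) (neg_sq c).symm]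
  simp only [logb_two_mul_Wden_zero_div hc2, logb_two_mul_Wden_one_div hc2, harg₀, harg₁, hE]
  ring

lemma integrable_sigmoid_sq_equivocation (s : ℝ) :
    Integrable (fun u => sigmoid (-2 * s ^ 2 - 2 * s * u) ^ 2) (gaussianReal 0 1) :=
  Integrable.of_bound (by fun_prop : Continuous _).aestronglyMeasurable 1
    (ae_of_all _ fun u => by
      rw [Real.norm_eq_abs, abs_pow, abs_of_pos (sigmoid_pos _)]
      exact pow_le_one₀ (sigmoid_nonneg _) (sigmoid_le_one _))

lemma integral_sigmoid_mul_eq (s : ℝ) :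
    ∫ u, sigmoid (-2 * s ^ 2 - 2 * s * u) * (-4 * s - 2 * u) ∂gaussianReal 0 1
      = -4 * s * ∫ u, sigmoid (-2 * s ^ 2 - 2 * s * u) ^ 2 ∂gaussianReal 0 1 := by
  set σ : ℝ → ℝ := fun u => sigmoid (-2 * s ^ 2 - 2 * s * u)
  have hσ_abs (u : ℝ) : |σ u| ≤ 1 := by
    rw [abs_of_pos (sigmoid_pos _)]; exact sigmoid_le_one _
  have hσ' (u : ℝ) : HasDerivAt σ (σ u * (1 - σ u) * (-2 * s)) u := by
    have h : HasDerivAt (fun u => -2 * s ^ 2 - 2 * s * u) (-2 * s) u :=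
      (((hasDerivAt_id u).const_mul (2 * s)).const_sub _).congr_deriv (by ring)
    exact (hasDerivAt_sigmoid _).comp u h
  have hint_σ' : Integrable (fun u => σ u * (1 - σ u) * (-2 * s)) (gaussianReal 0 1) := by
    refine Integrable.of_bound (by fun_prop : Continuous _).aestronglyMeasurable (2 * |s|)
      (ae_of_all _ fun u => ?_)
    have h0 := sigmoid_pos (-2 * s ^ 2 - 2 * s * u)
    have h1 := sigmoid_lt_one (-2 * s ^ 2 - 2 * s * u)
    rw [Real.norm_eq_abs, abs_mul, abs_of_nonneg (mul_nonneg h0.le (sub_nonneg.2 h1.le)),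
      abs_mul, abs_neg, abs_two]
    exact mul_le_of_le_one_left (by positivity) (by nlinarith)
  have hint_sq : Integrable (fun u => σ u ^ 2) (gaussianReal 0 1) :=
    integrable_sigmoid_sq_equivocation s
  have hint_id : Integrable (fun u => (u - 0) * σ u) (gaussianReal 0 1) := by
    refine integrable_gaussianReal_of_abs_le (by fun_prop : Continuous _).aestronglyMeasurable
      (a := 0) (b := 1) fun u => ?_
    rw [abs_mul, sub_zero]
    nlinarith [hσ_abs u, abs_nonneg u]
  -- Stein's lemma turns `u σ` into `-2s σ (1 - σ)`, leaving `-4s σ²`.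
  have hstein := integral_sub_mul_gaussianReal hσ' hσ_abs hint_σ'
  calc ∫ u, σ u * (-4 * s - 2 * u) ∂gaussianReal 0 1
      = ∫ u, (-4 * s * σ u ^ 2 + 2 * (σ u * (1 - σ u) * (-2 * s)) - 2 * ((u - 0) * σ u))
          ∂gaussianReal 0 1 := by
        congr with u; ring
    _ = -4 * s * ∫ u, σ u ^ 2 ∂gaussianReal 0 1 := by
        have hint : Integrable (fun u => -4 * s * σ u ^ 2 + 2 * (σ u * (1 - σ u) * (-2 * s)))
            (gaussianReal 0 1) := (hint_sq.const_mul _).add (hint_σ'.const_mul _)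
        rw [integral_sub hint (hint_id.const_mul _),
          integral_add (hint_sq.const_mul _) (hint_σ'.const_mul _), integral_const_mul,
          integral_const_mul, integral_const_mul, hstein]
        simp

lemma hasDerivAt_equivocation (s : ℝ) :
    HasDerivAt equivocation
      (-4 * s * ∫ u, sigmoid (-2 * s ^ 2 - 2 * s * u) ^ 2 ∂gaussianReal 0 1) s := by
  have hF (s' u : ℝ) : HasDerivAt (fun s => softplus (-2 * s ^ 2 - 2 * s * u))
      (sigmoid (-2 * s' ^ 2 - 2 * s' * u) * (-4 * s' - 2 * u)) s' := by
    have h : HasDerivAt (fun s => -2 * s ^ 2 - 2 * s * u) (-4 * s' - 2 * u) s' :=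
      (((hasDerivAt_pow 2 s').const_mul (-2)).sub
        (((hasDerivAt_id s').const_mul 2).mul_const u)).congr_deriv (by simp; ring)
    exact (hasDerivAt_softplus _).comp s' h
  have hbound : Integrable (fun u => 4 * (|s| + 1) + 2 * |u|) (gaussianReal 0 1) := by
    refine integrable_gaussianReal_of_abs_le (by fun_prop : Continuous _).aestronglyMeasurable
      (a := 4 * (|s| + 1)) (b := 2) fun u => ?_
    rw [abs_of_nonneg (by positivity)]
  have hderiv_le : ∀ u, ∀ s' ∈ Metric.ball s 1,
      ‖sigmoid (-2 * s' ^ 2 - 2 * s' * u) * (-4 * s' - 2 * u)‖ ≤ 4 * (|s| + 1) + 2 * |u| := by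
    intro u s' hs'
    have hs'_le : |s'| ≤ |s| + 1 := by
      have := abs_sub_abs_le_abs_sub s' s
      rw [Metric.mem_ball, Real.dist_eq] at hs'
      linarith
    have h0 := sigmoid_pos (-2 * s' ^ 2 - 2 * s' * u)
    have h1 := sigmoid_lt_one (-2 * s' ^ 2 - 2 * s' * u)
    have habs : |-4 * s' - 2 * u| ≤ 4 * |s'| + 2 * |u| :=
      (abs_sub _ _).trans_eq (by simp [abs_mul])
    rw [Real.norm_eq_abs, abs_mul, abs_of_pos h0]
    calc _ ≤ |-4 * s' - 2 * u| := mul_le_of_le_one_left (abs_nonneg _) h1.le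
      _ ≤ 4 * (|s| + 1) + 2 * |u| := by linarith
  rw [← integral_sigmoid_mul_eq]
  exact (hasDerivAt_integral_of_dominated_loc_of_deriv_le (Metric.ball_mem_nhds s one_pos)
    (Eventually.of_forall fun s' => (integrable_softplus_equivocation s').aestronglyMeasurable)
    (integrable_softplus_equivocation s) (by fun_prop : Continuous _).aestronglyMeasurable
    (ae_of_all _ hderiv_le) hbound (ae_of_all _ fun u s' _ => hF s' u)).2

lemma equivocation_strictAntiOn : StrictAntiOn equivocation (Ioi 0) := by
  refine strictAntiOn_of_hasDerivWithinAt_neg (convex_Ioi 0)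
    (fun s _ => (hasDerivAt_equivocation s).continuousAt.continuousWithinAt)
    (fun s _ => (hasDerivAt_equivocation s).hasDerivWithinAt) fun s hs => ?_
  rw [interior_Ioi, mem_Ioi] at hs
  have hpos : 0 < ∫ u, sigmoid (-2 * s ^ 2 - 2 * s * u) ^ 2 ∂gaussianReal 0 1 := by
    have hsupp : Function.support (fun u => sigmoid (-2 * s ^ 2 - 2 * s * u) ^ 2) = univ := by
      ext u
      simp [(sigmoid_pos _).ne']
    rw [integral_pos_iff_support_of_nonneg (fun u => sq_nonneg _)
      (integrable_sigmoid_sq_equivocation s), hsupp]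
    simp
  exact mul_neg_of_neg_of_pos (by linarith) hpos

/-- Proposition 1: monotonicity of the BI-AWGN symmetric capacity.
`h(σ²)` is strictly decreasing in the noise variance `σ²` on `(0,∞)`; equivalently,
under the Gaussian approximation with `σ² = 2/m`, the symmetric capacity is strictly
increasing in the LLR mean `m`. -/
theorem capBIAWGN_strictAnti :
    StrictAntiOn capBIAWGN (Set.Ioi 0) ∧
    StrictMonoOn (fun m : ℝ => capBIAWGN (2 / m)) (Set.Ioi 0) := by
  have hanti : StrictAntiOn capBIAWGN (Ioi 0) := by
    intro a ha b hb hab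
    have ha' : 0 < √a := sqrt_pos.2 ha
    have hb' : 0 < √b := sqrt_pos.2 hb
    have h := equivocation_strictAntiOn (inv_pos.2 hb') (inv_pos.2 ha')
      (inv_strictAnti₀ ha' (sqrt_lt_sqrt (le_of_lt ha) hab))
    rw [← sq_sqrt (le_of_lt ha), ← sq_sqrt (le_of_lt hb), capBIAWGN_sq_eq ha'.ne',
      capBIAWGN_sq_eq hb'.ne']
    exact sub_lt_sub_left (div_lt_div_of_pos_right h (log_pos one_lt_two)) 1
  exact ⟨hanti, fun m hm n hn hmn => hanti (mem_Ioi.2 (div_pos two_pos hn))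
    (mem_Ioi.2 (div_pos two_pos hm)) (div_lt_div_of_pos_left two_pos hm hmn)⟩
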